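/- For discrete random variables (X, Z, L, M, Y) with strictly positive conditioning probabilities, η2 = Σ_{x,l,m} E[Y | Z=0, L=l, M=m, X=x] P(L=l | Z=0, X=x) P(M=m | Z=0, X=x) P(X=x) equals E[ 1{Z=0} Y / P(Z=0 | X) · P(L | Z=0, X) / P(L | Z=0, M, X) ]. -/
import Mathlib


open Finset

noncomputable def pr {Ω : Type*} [Fintype Ω] (P : Ω → ℝ) (A : Set Ω) : ℝ :=
  ∑ ω : Ω, A.indicator P ω

noncomputable def cpr {Ω : Type*} [Fintype Ω] (P : Ω → ℝ) (A B : Set Ω) : ℝ :=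
  pr P (A ∩ B) / pr P B

noncomputable def cexp {Ω : Type*} [Fintype Ω] (P : Ω → ℝ) (f : Ω → ℝ) (B : Set Ω) : ℝ :=
  (∑ ω : Ω, B.indicator (fun ω => P ω * f ω) ω) / pr P B

noncomputable def ex {Ω : Type*} [Fintype Ω] (P : Ω → ℝ) (f : Ω → ℝ) : ℝ :=
  ∑ ω : Ω, P ω * f ω

def CondIndepFun {Ω : Type*} [Fintype Ω] (P : Ω → ℝ) {α β γ : Type*}
    (A : Ω → α) (B : Ω → β) (C : Ω → γ) : Prop :=
  ∀ a b c,
    pr P {ω | A ω = a ∧ B ω = b ∧ C ω = c} * pr P {ω | C ω = c} =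
      pr P {ω | A ω = a ∧ C ω = c} * pr P {ω | B ω = b ∧ C ω = c}

lemma pr_nonneg' {Ω : Type*} [Fintype Ω] (P : Ω → ℝ) (hP : ∀ ω, 0 ≤ P ω) (A : Set Ω) :
    0 ≤ pr P A :=
  Finset.sum_nonneg fun ω _ => Set.indicator_nonneg (fun a _ => hP a) ω

lemma pr_mono' {Ω : Type*} [Fintype Ω] (P : Ω → ℝ) (hP : ∀ ω, 0 ≤ P ω) {A B : Set Ω}
    (h : A ⊆ B) : pr P A ≤ pr P B := by
  classical
  refine Finset.sum_le_sum fun ω _ => ?_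
  by_cases hA : ω ∈ A
  · rw [Set.indicator_of_mem hA, Set.indicator_of_mem (h hA)]
  · rw [Set.indicator_of_notMem hA]
    exact Set.indicator_nonneg (fun a _ => hP a) ω

private lemma sum_collapse3 {α β γ : Type*} [Fintype α] [Fintype β] [Fintype γ]
    [DecidableEq α] [DecidableEq β] [DecidableEq γ] (a : α) (b : β) (c : γ)
    (g : α → β → γ → ℝ) :
    (∑ x : γ, ∑ l : α, ∑ m : β, if a = l ∧ b = m ∧ c = x then g l m x else 0) = g a b c := by
  rw [Finset.sum_eq_single c
    (fun x _ hx => Finset.sum_eq_zero fun l _ => Finset.sum_eq_zero fun m _ =>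
      if_neg fun h => hx h.2.2.symm)
    (fun h => absurd (Finset.mem_univ c) h)]
  rw [Finset.sum_eq_single a
    (fun l _ hl => Finset.sum_eq_zero fun m _ => if_neg fun h => hl h.1.symm)
    (fun h => absurd (Finset.mem_univ a) h)]
  rw [Finset.sum_eq_single b
    (fun m _ hm => if_neg fun h => hm h.2.1.symm)
    (fun h => absurd (Finset.mem_univ b) h)]
  simp

private noncomputable def Wt {Ω 𝓜 𝓛 𝓧 : Type*} [Fintype Ω] (P : Ω → ℝ) (Z : Ω → Bool)
    (L : Ω → 𝓛) (M : Ω → 𝓜) (X : Ω → 𝓧) (l : 𝓛) (m : 𝓜) (x : 𝓧) : ℝ :=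
  (cpr P {ω' | Z ω' = false} {ω' | X ω' = x})⁻¹ *
    cpr P {ω' | L ω' = l} {ω' | Z ω' = false ∧ X ω' = x} *
    (cpr P {ω' | L ω' = l} {ω' | Z ω' = false ∧ M ω' = m ∧ X ω' = x})⁻¹

private noncomputable def Sn {Ω 𝓜 𝓛 𝓧 : Type*} [Fintype Ω] (P : Ω → ℝ) (Z : Ω → Bool)
    (L : Ω → 𝓛) (M : Ω → 𝓜) (X : Ω → 𝓧) (Y : Ω → ℝ) (l : 𝓛) (m : 𝓜) (x : 𝓧) : ℝ :=
  ∑ ω : Ω, ({ω' | Z ω' = false ∧ L ω' = l ∧ M ω' = m ∧ X ω' = x} : Set Ω).indicator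
    (fun ω' => P ω' * Y ω') ω

private lemma sum_swap4 {Ω α β γ : Type*} [Fintype Ω] [Fintype α] [Fintype β] [Fintype γ]
    (f : γ → α → β → Ω → ℝ) :
    (∑ x : γ, ∑ l : α, ∑ m : β, ∑ ω : Ω, f x l m ω)
      = ∑ ω : Ω, ∑ x : γ, ∑ l : α, ∑ m : β, f x l m ω := by
  calc (∑ x : γ, ∑ l : α, ∑ m : β, ∑ ω : Ω, f x l m ω)
      = ∑ x : γ, ∑ l : α, ∑ ω : Ω, ∑ m : β, f x l m ω :=
        Finset.sum_congr rfl fun x _ => Finset.sum_congr rfl fun l _ => Finset.sum_comm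
    _ = ∑ x : γ, ∑ ω : Ω, ∑ l : α, ∑ m : β, f x l m ω :=
        Finset.sum_congr rfl fun x _ => Finset.sum_comm
    _ = ∑ ω : Ω, ∑ x : γ, ∑ l : α, ∑ m : β, f x l m ω := Finset.sum_comm

/-- Weighting identity for η₂ (Theorem 3.3). -/
theorem eta2_weighting {Ω 𝓜 𝓛 𝓧 : Type*} [Fintype Ω] [Fintype 𝓜] [Fintype 𝓛] [Fintype 𝓧]
    (P : Ω → ℝ) (hP : ∀ ω, 0 ≤ P ω) (hP1 : ∑ ω : Ω, P ω = 1)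
    (Z : Ω → Bool) (L : Ω → 𝓛) (M : Ω → 𝓜) (X : Ω → 𝓧) (Y : Ω → ℝ)
    (hpos : ∀ z l m x, 0 < pr P {ω | Z ω = z ∧ L ω = l ∧ M ω = m ∧ X ω = x})
    (hposL : ∀ l m x, 0 < cpr P {ω | L ω = l} {ω | Z ω = false ∧ M ω = m ∧ X ω = x}) :
    (∑ x : 𝓧, ∑ l : 𝓛, ∑ m : 𝓜,
        cexp P Y {ω | Z ω = false ∧ L ω = l ∧ M ω = m ∧ X ω = x} *
          cpr P {ω | L ω = l} {ω | Z ω = false ∧ X ω = x} *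
          cpr P {ω | M ω = m} {ω | Z ω = false ∧ X ω = x} *
          pr P {ω | X ω = x}) =
      ex P (fun ω =>
        (if Z ω = false then Y ω else 0) / cpr P {ω' | Z ω' = false} {ω' | X ω' = X ω} *
          cpr P {ω' | L ω' = L ω} {ω' | Z ω' = false ∧ X ω' = X ω} /
          cpr P {ω' | L ω' = L ω} {ω' | Z ω' = false ∧ M ω' = M ω ∧ X ω' = X ω}) := by
  classical
  by_cases hΩ : Nonempty Ω
  case neg =>
    have : IsEmpty Ω := not_nonempty_iff.mp hΩ
    simp [ex, cexp, pr]
  case pos =>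
  obtain ⟨ω₀⟩ := hΩ
  -- positivity facts
  have hp4 : ∀ (l : 𝓛) (m : 𝓜) (x : 𝓧),
      0 < pr P {ω' | Z ω' = false ∧ L ω' = l ∧ M ω' = m ∧ X ω' = x} :=
    fun l m x => hpos false l m x
  have hp3 : ∀ (m : 𝓜) (x : 𝓧), 0 < pr P {ω' | Z ω' = false ∧ M ω' = m ∧ X ω' = x} :=
    fun m x => lt_of_lt_of_le (hp4 (L ω₀) m x)
      (pr_mono' P hP (fun ω h => ⟨h.1, h.2.2⟩))
  have hp2 : ∀ (x : 𝓧), 0 < pr P {ω' | Z ω' = false ∧ X ω' = x} :=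
    fun x => lt_of_lt_of_le (hp4 (L ω₀) (M ω₀) x)
      (pr_mono' P hP (fun ω h => ⟨h.1, h.2.2.2⟩))
  have hp1 : ∀ (x : 𝓧), 0 < pr P {ω' | X ω' = x} :=
    fun x => lt_of_lt_of_le (hp4 (L ω₀) (M ω₀) x)
      (pr_mono' P hP (fun ω h => h.2.2.2))
  -- per-cell identity
  have key : ∀ (l : 𝓛) (m : 𝓜) (x : 𝓧),
      cexp P Y {ω | Z ω = false ∧ L ω = l ∧ M ω = m ∧ X ω = x} *
        cpr P {ω | L ω = l} {ω | Z ω = false ∧ X ω = x} *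
        cpr P {ω | M ω = m} {ω | Z ω = false ∧ X ω = x} *
        pr P {ω | X ω = x} = Sn P Z L M X Y l m x * Wt P Z L M X l m x := by
    intro l m x
    have e1 : ({ω' | M ω' = m} : Set Ω) ∩ {ω' | Z ω' = false ∧ X ω' = x} =
        {ω' | Z ω' = false ∧ M ω' = m ∧ X ω' = x} := by
      ext ω; simp only [Set.mem_inter_iff, Set.mem_setOf_eq]; tauto
    have e2 : ({ω' | L ω' = l} : Set Ω) ∩ {ω' | Z ω' = false ∧ M ω' = m ∧ X ω' = x} =
        {ω' | Z ω' = false ∧ L ω' = l ∧ M ω' = m ∧ X ω' = x} := by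
      ext ω; simp only [Set.mem_inter_iff, Set.mem_setOf_eq]; tauto
    have e3 : ({ω' | Z ω' = false} : Set Ω) ∩ {ω' | X ω' = x} =
        {ω' | Z ω' = false ∧ X ω' = x} := by
      ext ω; simp only [Set.mem_inter_iff, Set.mem_setOf_eq]
    have h4 := (hp4 l m x).ne'
    have h3 := (hp3 m x).ne'
    have h2 := (hp2 x).ne'
    have h1 := (hp1 x).ne'
    simp only [cexp, cpr, Wt, Sn, e1, e2, e3]
    field_simp
  -- pointwise rewriting of the expectation integrand
  have hpt : ∀ ω : Ω, P ω *
      ((if Z ω = false then Y ω else 0) / cpr P {ω' | Z ω' = false} {ω' | X ω' = X ω} *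
        cpr P {ω' | L ω' = L ω} {ω' | Z ω' = false ∧ X ω' = X ω} /
        cpr P {ω' | L ω' = L ω} {ω' | Z ω' = false ∧ M ω' = M ω ∧ X ω' = X ω}) =
      (if Z ω = false then P ω * Y ω else 0) * Wt P Z L M X (L ω) (M ω) (X ω) := by
    intro ω
    unfold Wt
    by_cases hz : Z ω = false
    · rw [if_pos hz, if_pos hz, div_eq_mul_inv, div_eq_mul_inv]; ring
    · rw [if_neg hz, if_neg hz]; simp
  -- collapsing a triple sum of indicators
  have hcol : ∀ ω : Ω,
      (if Z ω = false then P ω * Y ω else 0) * Wt P Z L M X (L ω) (M ω) (X ω) =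
      ∑ x : 𝓧, ∑ l : 𝓛, ∑ m : 𝓜,
        ({ω' | Z ω' = false ∧ L ω' = l ∧ M ω' = m ∧ X ω' = x} : Set Ω).indicator
          (fun ω' => P ω' * Y ω') ω * Wt P Z L M X l m x := by
    intro ω
    by_cases hz : Z ω = false
    · simp only [Set.indicator_apply, Set.mem_setOf_eq, hz, true_and, ite_mul, zero_mul,
        if_pos rfl]
      exact (sum_collapse3 (L ω) (M ω) (X ω)
        (fun l m x => P ω * Y ω * Wt P Z L M X l m x)).symm
    · simp [Set.indicator_apply, hz]
  calc (∑ x : 𝓧, ∑ l : 𝓛, ∑ m : 𝓜,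
        cexp P Y {ω | Z ω = false ∧ L ω = l ∧ M ω = m ∧ X ω = x} *
          cpr P {ω | L ω = l} {ω | Z ω = false ∧ X ω = x} *
          cpr P {ω | M ω = m} {ω | Z ω = false ∧ X ω = x} *
          pr P {ω | X ω = x})
      = ∑ x : 𝓧, ∑ l : 𝓛, ∑ m : 𝓜, Sn P Z L M X Y l m x * Wt P Z L M X l m x :=
        Finset.sum_congr rfl fun x _ => Finset.sum_congr rfl fun l _ =>
          Finset.sum_congr rfl fun m _ => key l m x
    _ = ∑ x : 𝓧, ∑ l : 𝓛, ∑ m : 𝓜, ∑ ω : Ω,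
          ({ω' | Z ω' = false ∧ L ω' = l ∧ M ω' = m ∧ X ω' = x} : Set Ω).indicator
            (fun ω' => P ω' * Y ω') ω * Wt P Z L M X l m x := by
        refine Finset.sum_congr rfl fun x _ => Finset.sum_congr rfl fun l _ =>
          Finset.sum_congr rfl fun m _ => ?_
        rw [Sn, Finset.sum_mul]
    _ = ∑ ω : Ω, ∑ x : 𝓧, ∑ l : 𝓛, ∑ m : 𝓜,
          ({ω' | Z ω' = false ∧ L ω' = l ∧ M ω' = m ∧ X ω' = x} : Set Ω).indicator
            (fun ω' => P ω' * Y ω') ω * Wt P Z L M X l m x :=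
        sum_swap4 _
    _ = ex P (fun ω =>
        (if Z ω = false then Y ω else 0) / cpr P {ω' | Z ω' = false} {ω' | X ω' = X ω} *
          cpr P {ω' | L ω' = L ω} {ω' | Z ω' = false ∧ X ω' = X ω} /
          cpr P {ω' | L ω' = L ω} {ω' | Z ω' = false ∧ M ω' = M ω ∧ X ω' = X ω}) := by
        rw [ex]
        exact Finset.sum_congr rfl fun ω _ => ((hpt ω).trans (hcol ω)).symm
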